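/- Strict improvement of InterZono over Zonotope in an example: there exist reals l < u and a corresponding parallelogram P = {(x,y) : l ≤ x ≤ u, kx + d ≤ y ≤ kx + c} (with k, c, d from the parallelogram tanh relaxation) and box B = [l,u] × [tanh(l), tanh(u)] such that P ∩ B is a proper subset of both P and B, while still containing the graph {(x, tanh x) : x ∈ [l,u]}. -/

import Mathlib

/-!
With `k` the slope of the chord of `f` over `[l, u]`, the residual `g x = f x - k x` takes the
same value at both endpoints, and `P` is the band of slope `k` between `min g` and `max g`.
If `f` is strictly increasing and rises strictly above its chord somewhere, then `max g > g u`,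
so the point `(u, k u + max g)` of `P` lies above the box; and `g > f l - k u` on `[l, u]`, so
the corner `(u, f l)` of the box lies below `P`. For `tanh` on `[0, 2]` the point above the chord
is `1`, because `tanh 2 = 2 tanh 1 / (1 + tanh² 1) < 2 tanh 1`.
-/

open Real Set

noncomputable section

def chordSlope (f : ℝ → ℝ) (l u : ℝ) : ℝ := (f u - f l) / (u - l)

def parallelogramRelaxation (f : ℝ → ℝ) (l u c d : ℝ) : Set (ℝ × ℝ) :=
  {p | l ≤ p.1 ∧ p.1 ≤ u ∧ chordSlope f l u * p.1 + d ≤ p.2 ∧ p.2 ≤ chordSlope f l u * p.1 + c}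

def boxRelaxation (f : ℝ → ℝ) (l u : ℝ) : Set (ℝ × ℝ) := Icc l u ×ˢ Icc (f l) (f u)

end

section ChordRelaxation

variable {f : ℝ → ℝ} {l u c d : ℝ}

theorem chordSlope_pos (hf : StrictMonoOn f (Icc l u)) (hlu : l < u) : 0 < chordSlope f l u :=
  div_pos (sub_pos.2 (hf (left_mem_Icc.2 hlu.le) (right_mem_Icc.2 hlu.le) hlu)) (sub_pos.2 hlu)

theorem sub_chordSlope_mul_left_eq (f : ℝ → ℝ) (l u : ℝ) :
    f l - chordSlope f l u * l = f u - chordSlope f l u * u := by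
  rcases eq_or_ne l u with rfl | hlu
  · rfl
  · have : u - l ≠ 0 := sub_ne_zero.2 hlu.symm
    unfold chordSlope
    field_simp
    ring

theorem graph_subset_parallelogramRelaxation
    (hc : IsGreatest ((fun x => f x - chordSlope f l u * x) '' Icc l u) c)
    (hd : IsLeast ((fun x => f x - chordSlope f l u * x) '' Icc l u) d) :
    {p : ℝ × ℝ | p.1 ∈ Icc l u ∧ p.2 = f p.1} ⊆ parallelogramRelaxation f l u c d := by
  rintro ⟨x, y⟩ ⟨hx, rfl : y = f x⟩
  have hdx := hd.2 (mem_image_of_mem _ hx)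
  have hcx := hc.2 (mem_image_of_mem _ hx)
  exact ⟨hx.1, hx.2, by linarith, by linarith⟩

theorem graph_subset_boxRelaxation (hf : MonotoneOn f (Icc l u)) :
    {p : ℝ × ℝ | p.1 ∈ Icc l u ∧ p.2 = f p.1} ⊆ boxRelaxation f l u := by
  rintro ⟨x, y⟩ ⟨hx, rfl : y = f x⟩
  exact ⟨hx, hf (left_mem_Icc.2 (hx.1.trans hx.2)) hx hx.1,
    hf hx (right_mem_Icc.2 (hx.1.trans hx.2)) hx.2⟩

theorem inter_boxRelaxation_ssubset_parallelogramRelaxation {x : ℝ} (hx : x ∈ Icc l u)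
    (habove : f l + chordSlope f l u * (x - l) < f x)
    (hc : IsGreatest ((fun x => f x - chordSlope f l u * x) '' Icc l u) c)
    (hd : IsLeast ((fun x => f x - chordSlope f l u * x) '' Icc l u) d) :
    parallelogramRelaxation f l u c d ∩ boxRelaxation f l u ⊂ parallelogramRelaxation f l u c d := by
  have hcx := hc.2 (mem_image_of_mem _ hx)
  have hdx := hd.2 (mem_image_of_mem _ hx)
  have := sub_chordSlope_mul_left_eq f l u
  refine inter_ssubset_left_iff.2 <| not_subset.2 ⟨(u, chordSlope f l u * u + c), ?_, ?_⟩
  · exact ⟨hx.1.trans hx.2, le_rfl, by linarith, le_rfl⟩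
  · rintro ⟨-, -, hle : _ ≤ f u⟩
    linarith

theorem sub_chordSlope_mul_right_lt (hf : StrictMonoOn f (Icc l u)) (hlu : l < u) {y : ℝ}
    (hy : y ∈ Icc l u) : f l - chordSlope f l u * u < f y - chordSlope f l u * y := by
  rcases hy.2.eq_or_lt with rfl | hyu
  · linarith [hf (left_mem_Icc.2 hlu.le) hy hlu]
  · have := mul_lt_mul_of_pos_left hyu (chordSlope_pos hf hlu)
    linarith [hf.monotoneOn (left_mem_Icc.2 hlu.le) hy hy.1]

theorem inter_boxRelaxation_ssubset_boxRelaxation (hf : StrictMonoOn f (Icc l u)) (hlu : l < u)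
    (hd : IsLeast ((fun x => f x - chordSlope f l u * x) '' Icc l u) d) :
    parallelogramRelaxation f l u c d ∩ boxRelaxation f l u ⊂ boxRelaxation f l u := by
  obtain ⟨y, hy, rfl⟩ := hd.1
  have := sub_chordSlope_mul_right_lt hf hlu hy
  refine inter_ssubset_right_iff.2 <| not_subset.2 ⟨(u, f l), ?_, ?_⟩
  · exact ⟨right_mem_Icc.2 hlu.le, le_rfl,
      hf.monotoneOn (left_mem_Icc.2 hlu.le) (right_mem_Icc.2 hlu.le) hlu.le⟩
  · rintro ⟨-, -, hle : _ + _ ≤ f l, -⟩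
    linarith

end ChordRelaxation

namespace Real

theorem continuous_tanh : Continuous tanh := by
  simp only [funext tanh_eq_sinh_div_cosh]
  exact continuous_sinh.div continuous_cosh fun x => (cosh_pos x).ne'

theorem tanh_strictMono : StrictMono tanh := fun a b hab =>
  lt_of_not_ge fun h => hab.not_ge <| by
    simpa only [artanh_tanh] using artanh_le_artanh (neg_one_lt_tanh b) (tanh_lt_one a) h

theorem tanh_two_mul_lt {x : ℝ} (hx : 0 < x) : tanh (2 * x) < 2 * tanh x := by
  have hs : 0 < sinh x := sinh_pos_iff.2 hx
  have hc : 0 < cosh x := cosh_pos x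
  rw [tanh_eq_sinh_div_cosh, tanh_eq_sinh_div_cosh, sinh_two_mul, cosh_two_mul,
    div_lt_iff₀ (by positivity), mul_div_assoc', div_mul_eq_mul_div, lt_div_iff₀ hc]
  nlinarith [mul_pos (mul_pos hs hs) hs]

end Real

open Real in
/-- Strict improvement of InterZono over Zonotope in an example: for some
`l < u`, the intersection of the parallelogram relaxation `P` and the box
relaxation `B` of `tanh` on `[l,u]` is a proper subset of each one, while still
containing the graph of `tanh` on `[l,u]`. -/
theorem interzono_strict_improvement_example :
    ∃ (l u c d : ℝ), l < u ∧
      IsGreatest ((fun x => tanh x - (tanh u - tanh l) / (u - l) * x) ''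
        Set.Icc l u) c ∧
      IsLeast ((fun x => tanh x - (tanh u - tanh l) / (u - l) * x) ''
        Set.Icc l u) d ∧
      (let P : Set (ℝ × ℝ) := {p | l ≤ p.1 ∧ p.1 ≤ u ∧
          (tanh u - tanh l) / (u - l) * p.1 + d ≤ p.2 ∧
          p.2 ≤ (tanh u - tanh l) / (u - l) * p.1 + c};
       let B : Set (ℝ × ℝ) := Set.Icc l u ×ˢ Set.Icc (tanh l) (tanh u);
       P ∩ B ⊂ P ∧ P ∩ B ⊂ B ∧
       {p : ℝ × ℝ | p.1 ∈ Set.Icc l u ∧ p.2 = tanh p.1} ⊆ P ∩ B) := by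
  have hK : IsCompact ((fun x => tanh x - chordSlope tanh 0 2 * x) '' Icc 0 2) :=
    isCompact_Icc.image (continuous_tanh.sub (continuous_const_mul _))
  have hne := (nonempty_Icc.2 zero_le_two).image (fun x => tanh x - chordSlope tanh 0 2 * x)
  obtain ⟨c, hc⟩ := hK.exists_isGreatest hne
  obtain ⟨d, hd⟩ := hK.exists_isLeast hne
  have habove : tanh 0 + chordSlope tanh 0 2 * (1 - 0) < tanh 1 := by
    have := tanh_two_mul_lt one_pos
    simp only [chordSlope, tanh_zero, mul_one] at this ⊢
    linarith
  have hmono : StrictMonoOn tanh (Icc 0 2) := tanh_strictMono.strictMonoOn _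
  refine ⟨0, 2, c, d, two_pos, hc, hd,
    inter_boxRelaxation_ssubset_parallelogramRelaxation ⟨zero_le_one, one_le_two⟩ habove hc hd,
    inter_boxRelaxation_ssubset_boxRelaxation hmono two_pos hd,
    subset_inter (graph_subset_parallelogramRelaxation hc hd)
      (graph_subset_boxRelaxation hmono.monotoneOn)⟩
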